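/- arXiv:2603.02673 — 3 statements merged into one kernel-verified Lean document; each statement's English description precedes it below -/
import Mathlib

section
/- Let X be a random vector on the finite hypergrid with pmf p supported on X ⊆ E, and for A ⊆ [d] and z ∈ ∏_{i∈A}{0,...,N_i−2} define φ_A^{(z)}(x) := (∏_{i∈A}(1{x_i = z_i} − 1{x_i = N_i−1})) / p_A(x_A), where p_A is the marginal pmf of X_A. Then the collection { φ_A^{(z)} } over all (A,z) spans the space L² of real-valued functions on the support X. -/
/-- Product of the single-variable functions `ψ_i^{(z_i)}` over `i ∈ A`. -/
def psiProd {d : ℕ} (N : Fin d → ℕ) (A : Finset (Fin d)) (z : Fin d → ℕ)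
    (x : ∀ i, Fin (N i)) : ℝ :=
  ∏ i ∈ A, ((if (x i : ℕ) = z i then (1 : ℝ) else 0) -
    (if (x i : ℕ) = N i - 1 then 1 else 0))

/-- Marginal pmf of `X_A` evaluated at `x_A`. -/
def marg {d : ℕ} {N : Fin d → ℕ} (p : (∀ i, Fin (N i)) → ℝ) (A : Finset (Fin d))
    (x : ∀ i, Fin (N i)) : ℝ :=
  ∑ y : ∀ i, Fin (N i), if ∀ i ∈ A, y i = x i then p y else 0

/-- The function `φ_A^{(z)}`. -/
noncomputable def phi {d : ℕ} (N : Fin d → ℕ) (p : (∀ i, Fin (N i)) → ℝ) (A : Finset (Fin d))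
    (z : Fin d → ℕ) (x : ∀ i, Fin (N i)) : ℝ :=
  psiProd N A z x / marg p A x

/-!
Since the ambient space is finite-dimensional, it suffices that a function `g` on the support
of `p` which is orthogonal (for `∑ x, f x * g x`) to every `φ_A^{(z)}` vanishes. Extend `g` by
zero and show, by strong induction on `A`, that its `A`-marginal `G_A` vanishes. If all proper
marginals of `g` vanish, expanding `∏_{i ∈ A} (1{x_i = y_i} - 1{x_i = N_i - 1})` gives
`G_A x = ∑_y ψ_A^{(y)}(x) g y`; hence `G_A / p_A` is a combination of the `φ_A^{(y)}` (those with
some `y_i = N_i - 1` vanish) and is orthogonal to `g`. As `G_A / p_A` depends only on `x_A`,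
pairing it with `g` gives, up to the size of the fibres, `∑ G_A² / p_A`, so `G_A = 0` where
`p_A > 0`; where `p_A = 0` it vanishes because `g` does. Finally `G_univ = g`.
-/

open Finset

theorem Submodule.span_eq_top_of_forall_dotProduct_eq_zero {K ι : Type*} [Field K] [Fintype ι]
    {S : Set (ι → K)} (h : ∀ g : ι → K, (∀ f ∈ S, f ⬝ᵥ g = 0) → g = 0) :
    Submodule.span K S = ⊤ := by
  classical
  by_contra hS
  obtain ⟨φ, hφ, hφS⟩ :=
    Submodule.exists_dual_map_eq_bot_of_lt_top (lt_top_iff_ne_top.2 hS) inferInstance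
  set g : ι → K := fun i => φ fun j => if i = j then 1 else 0
  have hφ_eq (f : ι → K) : φ f = f ⬝ᵥ g := LinearMap.pi_apply_eq_sum_univ φ f
  have hg : g = 0 := h _ fun f hf => by
    rw [← hφ_eq, ← Submodule.mem_bot K, ← hφS]
    exact Submodule.mem_map_of_mem (Submodule.subset_span hf)
  exact hφ (LinearMap.ext fun f => by simp [hφ_eq, hg])

namespace PhiSpan

variable {d : ℕ} {N : Fin d → ℕ}

theorem dependsOn_marg (g : (∀ i, Fin (N i)) → ℝ) (A : Finset (Fin d)) :
    DependsOn (marg g A) A := fun x x' h =>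
  sum_congr rfl fun y _ => if_congr (forall₂_congr fun i hi => by rw [h i hi]) rfl rfl

theorem marg_univ (g : (∀ i, Fin (N i)) → ℝ) (x : ∀ i, Fin (N i)) : marg g univ x = g x := by
  simp only [marg, mem_univ, forall_const, ← funext_iff, sum_ite_eq', if_true]

theorem marg_nonneg {p : (∀ i, Fin (N i)) → ℝ} (hp : ∀ x, 0 ≤ p x) (A : Finset (Fin d))
    (x : ∀ i, Fin (N i)) : 0 ≤ marg p A x :=
  sum_nonneg fun y _ => by split_ifs <;> simp [hp]

theorem marg_eq_zero_of_marg_eq_zero {p g : (∀ i, Fin (N i)) → ℝ} (hp : ∀ x, 0 ≤ p x)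
    (hg : ∀ x, p x = 0 → g x = 0) {A : Finset (Fin d)} {x : ∀ i, Fin (N i)}
    (hx : marg p A x = 0) : marg g A x = 0 := by
  have hterms := (sum_eq_zero_iff_of_nonneg fun y _ => by split_ifs <;> simp [hp]).1 hx
  refine sum_eq_zero fun y hy => ?_
  have hpy := hterms y hy
  split_ifs at hpy ⊢
  exacts [hg y hpy, rfl]

theorem card_filter_eqOn (A : Finset (Fin d)) (y : ∀ i, Fin (N i)) :
    #{x : ∀ i, Fin (N i) | ∀ i ∈ A, y i = x i} = ∏ i ∈ Aᶜ, N i := by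
  have : univ.filter (fun x : ∀ i, Fin (N i) => ∀ i ∈ A, y i = x i) =
      Fintype.piFinset fun i => if i ∈ A then {y i} else univ := by
    ext x
    simp only [mem_filter, mem_univ, true_and, Fintype.mem_piFinset]
    refine ⟨fun h i => ?_, fun h i hi => ?_⟩
    · split_ifs with hi <;> simp [h i, hi]
    · simpa [hi, eq_comm] using h i
  rw [this, Fintype.card_piFinset, ← prod_mul_prod_compl A,
    prod_eq_one fun i hi => by simp [hi], one_mul]
  exact prod_congr rfl fun i hi => by simp [mem_compl.1 hi]

theorem sum_mul_marg_of_dependsOn (g : (∀ i, Fin (N i)) → ℝ) {A : Finset (Fin d)}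
    {F : (∀ i, Fin (N i)) → ℝ} (hF : DependsOn F A) :
    ∑ x, F x * marg g A x = (∏ i ∈ Aᶜ, N i : ℕ) * ∑ x, F x * g x := by
  calc ∑ x, F x * marg g A x
      = ∑ y, (∑ x with ∀ i ∈ A, y i = x i, F x) * g y := by
        simp only [marg, mul_sum, sum_mul, sum_filter, mul_ite, ite_mul, mul_zero, zero_mul]
        exact sum_comm
    _ = ∑ y, (∏ i ∈ Aᶜ, N i : ℕ) * (F y * g y) := by
        refine sum_congr rfl fun y _ => ?_
        rw [sum_congr rfl fun x hx => hF fun i hi => ((mem_filter.1 hx).2 i hi).symm,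
          sum_const, card_filter_eqOn, nsmul_eq_mul, mul_assoc]
    _ = _ := (mul_sum ..).symm

theorem sum_psiProd_mul_eq_marg (g : (∀ i, Fin (N i)) → ℝ) {A : Finset (Fin d)}
    (hA : ∀ B ⊂ A, ∀ x, marg g B x = 0) (x : ∀ i, Fin (N i)) :
    ∑ y, psiProd N A (fun i => y i) x * g y = marg g A x := by
  have hmarg (B : Finset (Fin d)) :
      ∑ y : ∀ i, Fin (N i), (∏ i ∈ B, if (x i : ℕ) = y i then (1 : ℝ) else 0) * g y
        = marg g B x := by
    refine sum_congr rfl fun y _ => ?_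
    simp only [prod_boole, boole_mul, Fin.val_inj]
    congr! 1
    exact forall₂_congr fun _ _ => eq_comm
  calc ∑ y, psiProd N A (fun i => y i) x * g y
      = ∑ B ∈ A.powerset, (∏ i ∈ A \ B, -if (x i : ℕ) = N i - 1 then (1 : ℝ) else 0)
          * marg g B x := by
        simp only [psiProd, sub_eq_add_neg, prod_add, sum_mul, ← hmarg, mul_sum]
        rw [sum_comm]
        exact sum_congr rfl fun B _ => sum_congr rfl fun y _ => by ring
    _ = marg g A x := by
        rw [sum_eq_single_of_mem A (mem_powerset_self A) fun B hB hBA =>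
          by rw [hA B (ssubset_of_subset_of_ne (mem_powerset.1 hB) hBA), mul_zero]]
        simp

theorem psiProd_eq_zero_of_eq_last {A : Finset (Fin d)} {z : Fin d → ℕ} {i : Fin d} (hi : i ∈ A)
    (hz : z i = N i - 1) (x : ∀ i, Fin (N i)) : psiProd N A z x = 0 :=
  prod_eq_zero hi (by rw [hz, sub_self])

theorem sum_phi_mul_eq_zero_of_orthogonal {p g : (∀ i, Fin (N i)) → ℝ} {A : Finset (Fin d)}
    (hortho : ∀ z, (∀ i ∈ A, z i < N i - 1) → ∑ x, phi N p A z x * g x = 0)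
    (y : ∀ i, Fin (N i)) : ∑ x, phi N p A (fun i => y i) x * g x = 0 := by
  by_cases hy : ∀ i ∈ A, (y i : ℕ) < N i - 1
  · exact hortho _ hy
  · push Not at hy
    obtain ⟨i, hi, hle⟩ := hy
    have hlast : (y i : ℕ) = N i - 1 := by have := (y i).isLt; omega
    simp [phi, psiProd_eq_zero_of_eq_last (z := fun i => y i) hi hlast]

theorem marg_eq_zero_of_orthogonal {p g : (∀ i, Fin (N i)) → ℝ} (hp : ∀ x, 0 ≤ p x)
    (hg : ∀ x, p x = 0 → g x = 0) {A : Finset (Fin d)} (hA : ∀ B ⊂ A, ∀ x, marg g B x = 0)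
    (hortho : ∀ z, (∀ i ∈ A, z i < N i - 1) → ∑ x, phi N p A z x * g x = 0)
    (x : ∀ i, Fin (N i)) : marg g A x = 0 := by
  set F : (∀ i, Fin (N i)) → ℝ := fun x => marg g A x / marg p A x
  -- where `marg p A x = 0`, both sides vanish by the convention `_ / 0 = 0`
  have hF (x) : F x = ∑ y, phi N p A (fun i => y i) x * g y := by
    simp only [F, ← sum_psiProd_mul_eq_marg g hA, sum_div, phi, div_mul_eq_mul_div]
  have hFg : ∑ x, F x * g x = 0 := by
    simp only [hF, sum_mul]
    rw [sum_comm]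
    refine sum_eq_zero fun y _ => ?_
    rw [← mul_zero (g y), ← sum_phi_mul_eq_zero_of_orthogonal hortho y, mul_sum]
    exact sum_congr rfl fun x _ => by ring
  have hFG : ∑ x, F x * marg g A x = 0 := by
    rw [sum_mul_marg_of_dependsOn g fun x y hxy => by simp only [F, dependsOn_marg _ A hxy], hFg,
      mul_zero]
  have hsq : ∑ x, marg g A x ^ 2 / marg p A x = 0 := by
    rw [← hFG]
    exact sum_congr rfl fun x _ => by ring
  have hx := (sum_eq_zero_iff_of_nonneg fun x _ =>
    div_nonneg (sq_nonneg _) (marg_nonneg hp A x)).1 hsq x (mem_univ x)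
  rcases div_eq_zero_iff.1 hx with h | h
  · exact pow_eq_zero_iff two_ne_zero |>.1 h
  · exact marg_eq_zero_of_marg_eq_zero hp hg h

theorem eq_zero_of_orthogonal_phi {p g : (∀ i, Fin (N i)) → ℝ} (hp : ∀ x, 0 ≤ p x)
    (hg : ∀ x, p x = 0 → g x = 0)
    (hortho : ∀ A z, (∀ i ∈ A, z i < N i - 1) → ∑ x, phi N p A z x * g x = 0) : g = 0 := by
  have hmarg (A : Finset (Fin d)) : ∀ x, marg g A x = 0 := by
    induction A using Finset.strongInduction with
    | H A ih => exact marg_eq_zero_of_orthogonal hp hg ih (hortho A)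
  funext x
  rw [← marg_univ g x, hmarg, Pi.zero_apply]

end PhiSpan

theorem phi_family_spans_L2_general (d : ℕ) (N : Fin d → ℕ)
    (p : (∀ i, Fin (N i)) → ℝ) (hp0 : ∀ x, 0 ≤ p x) :
    Submodule.span ℝ
      {f : {x : ∀ i, Fin (N i) // p x ≠ 0} → ℝ | ∃ (A : Finset (Fin d)) (z : Fin d → ℕ),
        (∀ i ∈ A, z i < N i - 1) ∧ f = fun x => phi N p A z x.1} = ⊤ := by
  classical
  refine Submodule.span_eq_top_of_forall_dotProduct_eq_zero fun g hg => ?_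
  set G : (∀ i, Fin (N i)) → ℝ := fun x => if h : p x = 0 then 0 else g ⟨x, h⟩
  have hsum (F : (∀ i, Fin (N i)) → ℝ) : ∑ x, F x * G x = ∑ x : {x // p x ≠ 0}, F x * g x :=
    sum_congr_set {x | p x ≠ 0} _ _ (fun x hx => by simp [G, dif_neg (show p x ≠ 0 from hx)])
      fun x hx => by simp [G, dif_pos (not_not.1 hx)]
  have hG : G = 0 := PhiSpan.eq_zero_of_orthogonal_phi hp0 (fun x hx => dif_pos hx)
    fun A z hz => by rw [hsum]; exact hg _ ⟨A, z, hz, rfl⟩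
  funext x
  simpa [G, x.2] using congr_fun hG x

theorem phi_family_spans_L2 (d : ℕ) (hd : 1 ≤ d) (N : Fin d → ℕ) (hN : ∀ i, 1 ≤ N i)
    (p : (∀ i, Fin (N i)) → ℝ) (hp0 : ∀ x, 0 ≤ p x) (hp1 : ∑ x, p x = 1) :
    Submodule.span ℝ
      {f : {x : ∀ i, Fin (N i) // p x ≠ 0} → ℝ | ∃ (A : Finset (Fin d)) (z : Fin d → ℕ),
        (∀ i ∈ A, z i < N i - 1) ∧ f = fun x => phi N p A z x.1} = ⊤ :=
  phi_family_spans_L2_general d N p hp0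
end

section
/- If the support of p is the full hypergrid E, then the collection { φ_A^{(z)} : (A,z) ∈ I } is a basis of the space of real-valued functions on E, and hence every function f : E → ℝ has a unique expansion f = ∑_{(A,z)∈I} c_A^{(z)} φ_A^{(z)}. -/
section aux
variable {d : ℕ} {N : Fin d → ℕ}

lemma marg_pos {p : (∀ i, Fin (N i)) → ℝ} (hp : ∀ x, 0 < p x) (A : Finset (Fin d))
    (x : ∀ i, Fin (N i)) : 0 < marg p A x := by
  unfold marg
  apply Finset.sum_pos'
  · intro y _
    split
    · exact (hp y).le
    · exact le_rfl
  · exact ⟨x, Finset.mem_univ x, by simp [hp x]⟩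

lemma marg_congr (p : (∀ i, Fin (N i)) → ℝ) (A : Finset (Fin d))
    {x y : ∀ i, Fin (N i)} (h : ∀ j ∈ A, x j = y j) : marg p A x = marg p A y := by
  unfold marg
  refine Finset.sum_congr rfl fun y' _ => ?_
  have : (∀ i ∈ A, y' i = x i) ↔ (∀ i ∈ A, y' i = y i) :=
    ⟨fun H i hi => (H i hi).trans (h i hi), fun H i hi => (H i hi).trans (h i hi).symm⟩
  simp [this]

lemma psiProd_congr (A : Finset (Fin d)) (z : Fin d → ℕ)
    {x y : ∀ i, Fin (N i)} (h : ∀ j ∈ A, x j = y j) : psiProd N A z x = psiProd N A z y := by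
  unfold psiProd
  exact Finset.prod_congr rfl fun j hj => by rw [h j hj]

/-- summing a single-site ψ against a function not depending on coordinate i gives 0 -/
lemma sum_single_site (i : Fin d) (w : ℕ) (hw : w < N i - 1)
    (h : (∀ j, Fin (N j)) → ℝ)
    (hinv : ∀ x y : (∀ j, Fin (N j)), (∀ j, j ≠ i → x j = y j) → h x = h y) :
    ∑ x : ∀ j, Fin (N j), h x *
      ((if (x i : ℕ) = w then (1:ℝ) else 0) - (if (x i : ℕ) = N i - 1 then 1 else 0)) = 0 := by
  have hNi : N i - 1 < N i := Nat.sub_lt (by omega) one_pos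
  have hwlt : w < N i := by omega
  set bw : Fin (N i) := ⟨w, hwlt⟩ with hbw
  set bN : Fin (N i) := ⟨N i - 1, hNi⟩ with hbN
  have hvw : (bw : ℕ) = w := rfl
  have hvN : (bN : ℕ) = N i - 1 := rfl
  have hne : bw ≠ bN := by
    intro hE
    have := congrArg Fin.val hE
    rw [hvw, hvN] at this
    omega
  set g : (∀ j, Fin (N j)) → (∀ j, Fin (N j)) :=
    fun x => Function.update x i (Equiv.swap bw bN (x i)) with hg
  have hgi : ∀ x, (g x) i = Equiv.swap bw bN (x i) := by
    intro x; simp [hg]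
  have hgoff : ∀ x j, j ≠ i → (g x) j = x j := by
    intro x j hj; simp [hg, Function.update_of_ne hj]
  have hchar : ∀ b : Fin (N i), b ≠ bw → b ≠ bN →
      ((if (b : ℕ) = w then (1:ℝ) else 0) - (if (b : ℕ) = N i - 1 then 1 else 0)) = 0 := by
    intro b h1 h2
    rw [if_neg (fun hb => h1 (Fin.ext (hb.trans hvw.symm))),
      if_neg (fun hb => h2 (Fin.ext (hb.trans hvN.symm))), sub_zero]
  have hcharswap : ∀ b : Fin (N i),
      ((if ((Equiv.swap bw bN b : Fin (N i)) : ℕ) = w then (1:ℝ) else 0)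
        - if ((Equiv.swap bw bN b : Fin (N i)) : ℕ) = N i - 1 then 1 else 0)
      = -(((if (b : ℕ) = w then (1:ℝ) else 0) - if (b : ℕ) = N i - 1 then 1 else 0)) := by
    intro b
    rcases eq_or_ne b bw with rfl | h1
    · rw [Equiv.swap_apply_left, hvw, hvN,
        if_neg (by omega : ¬ (N i - 1 = w)), if_pos rfl, if_pos rfl,
        if_neg (by omega : ¬ (w = N i - 1))]
      ring
    · rcases eq_or_ne b bN with rfl | h2
      · rw [Equiv.swap_apply_right, hvw, hvN,
          if_pos rfl, if_neg (by omega : ¬ (w = N i - 1)),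
          if_neg (by omega : ¬ (N i - 1 = w)), if_pos rfl]
        ring
      · rw [Equiv.swap_apply_of_ne_of_ne h1 h2, hchar b h1 h2]
        ring
  apply Finset.sum_ninvolution g
  · intro x
    have h1 : h (g x) = h x := hinv _ _ (fun j hj => hgoff x j hj)
    rw [h1, hgi, hcharswap]
    ring
  · intro x hx
    intro hgx
    apply hx
    have hfix : Equiv.swap bw bN (x i) = x i := by
      conv_rhs => rw [← hgx]
      rw [hgi]
    rcases eq_or_ne (x i) bw with hxe | h1
    · rw [hxe, Equiv.swap_apply_left] at hfix
      exact (hne.symm hfix).elim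
    · rcases eq_or_ne (x i) bN with hxe | h2
      · rw [hxe, Equiv.swap_apply_right] at hfix
        exact (hne hfix).elim
      · rw [hchar (x i) h1 h2, mul_zero]
  · intro x; exact Finset.mem_univ _
  · intro x
    funext j
    rcases eq_or_ne j i with rfl | hj
    · rw [hgi, hgi, Equiv.swap_apply_self]
    · rw [hgoff _ _ hj, hgoff _ _ hj]

end aux

/-- The family `φ_A^{(z)}` indexed by the index space `I`. -/
noncomputable def phiFam {d : ℕ} (N : Fin d → ℕ) (p : (∀ i, Fin (N i)) → ℝ)
    (Az : Σ A : Finset (Fin d), ∀ i : A, Fin (N i.1 - 1)) :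
    (∀ i, Fin (N i)) → ℝ :=
  phi N p Az.1 (fun i => if h : i ∈ Az.1 then (Az.2 ⟨i, h⟩ : ℕ) else 0)

section main
variable {d : ℕ} {N : Fin d → ℕ}

lemma ortho (p : (∀ i, Fin (N i)) → ℝ) (A0 A : Finset (Fin d)) (hA : ¬ A0 ⊆ A)
    (w : Fin d → ℕ) (hw : ∀ i ∈ A0, w i < N i - 1) (z : Fin d → ℕ) :
    ∑ x : ∀ j, Fin (N j), psiProd N A0 w x * phi N p A z x = 0 := by
  obtain ⟨i, hiA0, hiA⟩ := Finset.not_subset.mp hA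
  have key := sum_single_site i (w i) (hw i hiA0)
    (fun x => psiProd N (A0.erase i) w x * phi N p A z x)
    (by
      intro x y hxy
      have h1 : psiProd N (A0.erase i) w x = psiProd N (A0.erase i) w y :=
        psiProd_congr _ _ (fun j hj => hxy j (Finset.ne_of_mem_erase hj))
      have h2 : phi N p A z x = phi N p A z y := by
        unfold phi
        rw [psiProd_congr A z (fun j hj => hxy j (fun hE => hiA (hE ▸ hj))),
          marg_congr p A (fun j hj => hxy j (fun hE => hiA (hE ▸ hj)))]
      rw [h1, h2])
  rw [← key]
  apply Finset.sum_congr rfl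
  intro x _
  have hfac : psiProd N A0 w x =
      ((if (x i : ℕ) = w i then (1:ℝ) else 0) - (if (x i : ℕ) = N i - 1 then 1 else 0)) *
        psiProd N (A0.erase i) w x := (Finset.mul_prod_erase A0 _ hiA0).symm
  rw [hfac]
  ring

lemma indep (hN : ∀ i, 1 ≤ N i) (p : (∀ i, Fin (N i)) → ℝ) (hp : ∀ x, 0 < p x) :
    LinearIndependent ℝ (phiFam N p) := by
  rw [Fintype.linearIndependent_iff]
  intro c hc
  have hpt : ∀ x, ∑ Az : (Σ A : Finset (Fin d), ∀ i : A, Fin (N i.1 - 1)),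
      c Az * phiFam N p Az x = 0 := by
    intro x
    have h := congrFun hc x
    simpa [Finset.sum_apply] using h
  suffices key : ∀ m (A0 : Finset (Fin d)) (z0 : ∀ i : A0, Fin (N i.1 - 1)),
      d - A0.card ≤ m → c ⟨A0, z0⟩ = 0 by
    rintro ⟨A, z⟩
    exact key d A z (Nat.sub_le _ _)
  intro m
  induction m using Nat.strong_induction_on with
  | _ m IH =>
  intro A0 z0 _hm
  classical
  set zf : ∀ (B : Finset (Fin d)), (∀ i : B, Fin (N i.1 - 1)) → (Fin d → ℕ) :=
    fun B zz i => if h : i ∈ B then (zz ⟨i, h⟩ : ℕ) else 0 with hzf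
  have hzflt : ∀ (B : Finset (Fin d)) (zz : ∀ i : B, Fin (N i.1 - 1)) (i : Fin d),
      i ∈ B → zf B zz i < N i - 1 := by
    intro B zz i hi
    simp only [hzf, dif_pos hi]
    exact (zz ⟨i, hi⟩).is_lt
  have hfamAz : ∀ (Az : Σ A : Finset (Fin d), ∀ i : A, Fin (N i.1 - 1)),
      phiFam N p Az = phi N p Az.1 (zf Az.1 Az.2) := fun _ => rfl
  -- Step 1
  have hw0 : ∀ w : ∀ i : A0, Fin (N i.1 - 1),
      ∑ z' : ∀ i : A0, Fin (N i.1 - 1), c ⟨A0, z'⟩ *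
        (∑ x : ∀ j, Fin (N j), psiProd N A0 (zf A0 w) x * phi N p A0 (zf A0 z') x) = 0 := by
    intro w
    have h1 : ∑ Az : (Σ A : Finset (Fin d), ∀ i : A, Fin (N i.1 - 1)), c Az *
        (∑ x : ∀ j, Fin (N j), psiProd N A0 (zf A0 w) x * phi N p Az.1 (zf Az.1 Az.2) x)
        = 0 := by
      have h0 : ∑ x : ∀ j, Fin (N j), psiProd N A0 (zf A0 w) x *
          (∑ Az : (Σ A : Finset (Fin d), ∀ i : A, Fin (N i.1 - 1)),
            c Az * phiFam N p Az x) = 0 := by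
        simp [hpt]
      rw [← h0]
      simp only [Finset.mul_sum, hfamAz]
      rw [Finset.sum_comm]
      exact Finset.sum_congr rfl fun x _ => Finset.sum_congr rfl fun Az _ => by ring
    rw [← Finset.univ_sigma_univ, Finset.sum_sigma] at h1
    rw [← h1]
    symm
    apply Finset.sum_eq_single_of_mem A0 (Finset.mem_univ A0)
    intro A _ hne
    by_cases hsub : A0 ⊆ A
    · have hss : A0 ⊂ A := Finset.ssubset_iff_subset_ne.mpr ⟨hsub, fun h => hne h.symm⟩
      have hcard : A0.card < A.card := Finset.card_lt_card hss
      have hAd : A.card ≤ d := by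
        have := Finset.card_le_univ A
        simpa using this
      apply Finset.sum_eq_zero
      intro z' _
      rw [IH (d - A.card) (by omega) A z' le_rfl, zero_mul]
    · apply Finset.sum_eq_zero
      intro z' _
      rw [ortho p A0 A hsub _ (fun i hi => hzflt A0 w i hi), mul_zero]
  -- Step 2
  set S : (∀ j, Fin (N j)) → ℝ :=
    fun x => ∑ z' : ∀ i : A0, Fin (N i.1 - 1), c ⟨A0, z'⟩ * psiProd N A0 (zf A0 z') x with hS
  have hquad : ∑ x : ∀ j, Fin (N j), S x * S x / marg p A0 x = 0 := by
    have h2 : ∑ w : ∀ i : A0, Fin (N i.1 - 1), c ⟨A0, w⟩ *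
        (∑ z' : ∀ i : A0, Fin (N i.1 - 1), c ⟨A0, z'⟩ *
          (∑ x : ∀ j, Fin (N j), psiProd N A0 (zf A0 w) x * phi N p A0 (zf A0 z') x)) = 0 := by
      simp only [hw0, mul_zero, Finset.sum_const_zero]
    rw [← h2]
    have step1 : ∀ x : ∀ j, Fin (N j), S x * S x / marg p A0 x =
        ∑ w : ∀ i : A0, Fin (N i.1 - 1), ∑ z' : ∀ i : A0, Fin (N i.1 - 1),
          c ⟨A0, w⟩ * (c ⟨A0, z'⟩ *
            (psiProd N A0 (zf A0 w) x * phi N p A0 (zf A0 z') x)) := by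
      intro x
      rw [hS]
      simp only
      rw [Finset.sum_mul_sum, Finset.sum_div]
      apply Finset.sum_congr rfl
      intro w _
      rw [Finset.sum_div]
      apply Finset.sum_congr rfl
      intro z' _
      unfold phi
      ring
    calc (∑ x : ∀ j, Fin (N j), S x * S x / marg p A0 x)
        = ∑ x : ∀ j, Fin (N j), ∑ w : ∀ i : A0, Fin (N i.1 - 1),
            ∑ z' : ∀ i : A0, Fin (N i.1 - 1), c ⟨A0, w⟩ * (c ⟨A0, z'⟩ *
              (psiProd N A0 (zf A0 w) x * phi N p A0 (zf A0 z') x)) :=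
          Finset.sum_congr rfl fun x _ => step1 x
      _ = ∑ w : ∀ i : A0, Fin (N i.1 - 1), ∑ x : ∀ j, Fin (N j),
            ∑ z' : ∀ i : A0, Fin (N i.1 - 1), c ⟨A0, w⟩ * (c ⟨A0, z'⟩ *
              (psiProd N A0 (zf A0 w) x * phi N p A0 (zf A0 z') x)) := Finset.sum_comm
      _ = ∑ w : ∀ i : A0, Fin (N i.1 - 1), ∑ z' : ∀ i : A0, Fin (N i.1 - 1),
            ∑ x : ∀ j, Fin (N j), c ⟨A0, w⟩ * (c ⟨A0, z'⟩ *
              (psiProd N A0 (zf A0 w) x * phi N p A0 (zf A0 z') x)) :=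
          Finset.sum_congr rfl fun w _ => Finset.sum_comm
      _ = ∑ w : ∀ i : A0, Fin (N i.1 - 1), c ⟨A0, w⟩ *
            (∑ z' : ∀ i : A0, Fin (N i.1 - 1), c ⟨A0, z'⟩ *
              (∑ x : ∀ j, Fin (N j), psiProd N A0 (zf A0 w) x * phi N p A0 (zf A0 z') x)) := by
          simp only [Finset.mul_sum]
  have hSzero : ∀ x, S x = 0 := by
    intro x
    have hnn : ∀ y ∈ (Finset.univ : Finset (∀ j, Fin (N j))),
        0 ≤ S y * S y / marg p A0 y := fun y _ =>
      div_nonneg (mul_self_nonneg _) (marg_pos hp A0 y).le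
    have h3 := (Finset.sum_eq_zero_iff_of_nonneg hnn).mp hquad x (Finset.mem_univ x)
    rcases div_eq_zero_iff.mp h3 with h4 | h4
    · exact mul_self_eq_zero.mp h4
    · exact absurd h4 (marg_pos hp A0 x).ne'
  -- Step 3 : evaluate
  set xst : ∀ j, Fin (N j) := fun j =>
    if h : j ∈ A0 then ⟨(z0 ⟨j, h⟩ : ℕ), lt_of_lt_of_le (z0 ⟨j, h⟩).is_lt (Nat.sub_le _ _)⟩
    else ⟨N j - 1, Nat.sub_lt (hN j) one_pos⟩ with hxst
  have hval : ∀ j (h : j ∈ A0), (xst j : ℕ) = (z0 ⟨j, h⟩ : ℕ) := by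
    intro j h; simp [hxst, dif_pos h]
  have heval : ∀ z' : ∀ i : A0, Fin (N i.1 - 1),
      psiProd N A0 (zf A0 z') xst =
        if (∀ i : A0, (z0 i : ℕ) = (z' i : ℕ)) then 1 else 0 := by
    intro z'
    unfold psiProd
    rw [show (∏ i ∈ A0, ((if (xst i : ℕ) = zf A0 z' i then (1:ℝ) else 0) -
        (if (xst i : ℕ) = N i - 1 then 1 else 0)))
      = ∏ i ∈ A0, (if (xst i : ℕ) = zf A0 z' i then (1:ℝ) else 0) from
      Finset.prod_congr rfl fun i hi => by
        have hne2 : ¬ ((xst i : ℕ) = N i - 1) := by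
          rw [hval i hi]
          have h9 : (z0 ⟨i, hi⟩ : ℕ) < N i - 1 := (z0 ⟨i, hi⟩).is_lt
          omega
        rw [if_neg hne2, sub_zero]]
    rw [Finset.prod_boole]
    congr 1
    simp only [eq_iff_iff]
    constructor
    · intro H i
      have := H i.1 i.2
      rw [hval i.1 i.2, hzf] at this
      simpa [dif_pos i.2] using this
    · intro H i hi
      rw [hval i hi, hzf]
      simpa [dif_pos hi] using H ⟨i, hi⟩
  have h5 := hSzero xst
  rw [hS] at h5
  simp only at h5
  rw [show (∑ z' : ∀ i : A0, Fin (N i.1 - 1), c ⟨A0, z'⟩ * psiProd N A0 (zf A0 z') xst)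
    = ∑ z' : ∀ i : A0, Fin (N i.1 - 1), c ⟨A0, z'⟩ *
        (if (∀ i : A0, (z0 i : ℕ) = (z' i : ℕ)) then 1 else 0) from
    Finset.sum_congr rfl fun z' _ => by rw [heval z']] at h5
  rw [Finset.sum_eq_single_of_mem z0 (Finset.mem_univ z0)] at h5
  · rw [if_pos (fun i => rfl), mul_one] at h5
    exact h5
  · intro z' _ hne
    rw [if_neg, mul_zero]
    intro H
    apply hne
    funext i
    exact (Fin.ext (H i).symm)

lemma card_index (hN : ∀ i, 1 ≤ N i) :
    Fintype.card (Σ A : Finset (Fin d), ∀ i : A, Fin (N i.1 - 1)) =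
      Fintype.card (∀ i, Fin (N i)) := by
  classical
  rw [Fintype.card_sigma, Fintype.card_pi]
  simp only [Fintype.card_pi, Fintype.card_fin, Finset.prod_coe_sort]
  have h := Finset.prod_add (fun i => N i - 1) (fun _ => 1) (Finset.univ : Finset (Fin d))
  simp only [Finset.prod_const_one, mul_one] at h
  rw [Finset.powerset_univ] at h
  have h2 : (∏ i, (N i - 1 + 1)) = ∏ i, N i :=
    Finset.prod_congr rfl fun i _ => by have := hN i; omega
  rw [← h2, h]
  exact Finset.sum_congr rfl fun A _ => Finset.prod_coe_sort A fun i => N i - 1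

end main

theorem phi_basis_of_full_support (d : ℕ) (hd : 1 ≤ d) (N : Fin d → ℕ)
    (hN : ∀ i, 1 ≤ N i) (p : (∀ i, Fin (N i)) → ℝ) (hp : ∀ x, 0 < p x)
    (hp1 : ∑ x, p x = 1) :
    LinearIndependent ℝ (phiFam N p) ∧
      Submodule.span ℝ (Set.range (phiFam N p)) = ⊤ ∧
      ∀ f : (∀ i, Fin (N i)) → ℝ,
        ∃! c : (Σ A : Finset (Fin d), ∀ i : A, Fin (N i.1 - 1)) → ℝ,
          f = ∑ Az, c Az • phiFam N p Az := by
  have hli := indep hN p hp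
  have hcard : Fintype.card (Σ A : Finset (Fin d), ∀ i : A, Fin (N i.1 - 1)) =
      Module.finrank ℝ ((∀ i, Fin (N i)) → ℝ) := by
    rw [Module.finrank_fintype_fun_eq_card, card_index hN]
  have hspan := hli.span_eq_top_of_card_eq_finrank' hcard
  refine ⟨hli, hspan, ?_⟩
  intro f
  have hf : f ∈ Submodule.span ℝ (Set.range (phiFam N p)) := by
    rw [hspan]; exact Submodule.mem_top
  obtain ⟨c, hcf⟩ := Submodule.mem_span_range_iff_exists_fun ℝ |>.mp hf
  refine ⟨c, hcf.symm, ?_⟩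
  intro c' hc'
  have hz : ∑ Az, (c' Az - c Az) • phiFam N p Az = 0 := by
    simp only [sub_smul, Finset.sum_sub_distrib]
    rw [← hc', hcf, sub_self]
  have h0 := Fintype.linearIndependent_iff.mp hli _ hz
  funext Az
  have := h0 Az
  linarith [this]
end

section
/- If the components X_1,...,X_d are mutually independent, then the family { φ_A^{(z)} } is orthogonal across different subsets: for all A ≠ B and all admissible z^(A), z^(B), one has E[ φ_A^{(z^(A))}(X) φ_B^{(z^(B))}(X) ] = 0. -/
/-- `φ_A^{(z)}` in the independent case: the marginal pmf of `X_A` is the product of the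
marginals of the `X_i`, `i ∈ A`. -/
noncomputable def phiIndep {d : ℕ} (N : Fin d → ℕ) (pI : ∀ i, Fin (N i) → ℝ)
    (A : Finset (Fin d)) (z : Fin d → ℕ) (x : ∀ i, Fin (N i)) : ℝ :=
  psiProd N A z x / ∏ i ∈ A, pI i (x i)

lemma sum_indicator_fin {n : ℕ} (k : ℕ) (hk : k < n) :
    ∑ x : Fin n, (if (x : ℕ) = k then (1 : ℝ) else 0) = 1 := by
  have h : ∀ x : Fin n, ((x : ℕ) = k) ↔ (x = ⟨k, hk⟩) := fun x => by
    simp [Fin.ext_iff]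
  simp_rw [h]
  simp

lemma sum_psi_zero {n : ℕ} (hn : 1 ≤ n) (k : ℕ) (hk : k < n) :
    ∑ x : Fin n, ((if (x : ℕ) = k then (1 : ℝ) else 0) -
      (if (x : ℕ) = n - 1 then 1 else 0)) = 0 := by
  rw [Finset.sum_sub_distrib, sum_indicator_fin k hk,
    sum_indicator_fin (n - 1) (by omega)]
  ring

theorem phi_orthogonal_of_independent (d : ℕ) (hd : 1 ≤ d) (N : Fin d → ℕ)
    (hN : ∀ i, 1 ≤ N i) (pI : ∀ i, Fin (N i) → ℝ)
    (hpos : ∀ i x, 0 < pI i x) (hsum : ∀ i, ∑ x, pI i x = 1)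
    (A B : Finset (Fin d)) (hAB : A ≠ B)
    (u v : Fin d → ℕ) (hu : ∀ i ∈ A, u i < N i - 1) (hv : ∀ i ∈ B, v i < N i - 1) :
    ∑ x : ∀ i, Fin (N i), (∏ i, pI i (x i)) *
      (phiIndep N pI A u x * phiIndep N pI B v x) = 0 := by
  set g : ∀ i, Fin (N i) → ℝ := fun i x =>
    pI i x *
      ((if i ∈ A then ((if (x : ℕ) = u i then (1 : ℝ) else 0) -
          (if (x : ℕ) = N i - 1 then 1 else 0)) / pI i x else 1) *
       (if i ∈ B then ((if (x : ℕ) = v i then (1 : ℝ) else 0) -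
          (if (x : ℕ) = N i - 1 then 1 else 0)) / pI i x else 1)) with hg
  have key : ∀ x : ∀ i, Fin (N i),
      (∏ i, pI i (x i)) * (phiIndep N pI A u x * phiIndep N pI B v x)
        = ∏ i, g i (x i) := by
    intro x
    simp only [hg, Finset.prod_mul_distrib, Finset.prod_ite_mem, Finset.univ_inter]
    unfold phiIndep psiProd
    rw [Finset.prod_div_distrib, Finset.prod_div_distrib]
  rw [Finset.sum_congr rfl fun x _ => key x, ← Fintype.prod_sum g]
  -- find an index in the symmetric difference
  have hne : (symmDiff A B).Nonempty := by
    rw [Finset.nonempty_iff_ne_empty]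
    intro h
    exact hAB (by simpa [symmDiff_eq_bot] using h)
  obtain ⟨i0, hi0⟩ := hne
  refine Finset.prod_eq_zero (Finset.mem_univ i0) ?_
  rw [Finset.mem_symmDiff] at hi0
  have hp := fun x => (hpos i0 x).ne'
  rcases hi0 with ⟨hiA, hiB⟩ | ⟨hiB, hiA⟩
  · have : ∀ x : Fin (N i0), g i0 x = ((if (x : ℕ) = u i0 then (1 : ℝ) else 0) -
        (if (x : ℕ) = N i0 - 1 then 1 else 0)) := by
      intro x
      simp only [hg, if_pos hiA, if_neg hiB, mul_one, ← mul_div_assoc]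
      exact mul_div_cancel_left₀ _ (hp x)
    rw [Finset.sum_congr rfl fun x _ => this x]
    exact sum_psi_zero (hN i0) (u i0) (by have := hu i0 hiA; omega)
  · have : ∀ x : Fin (N i0), g i0 x = ((if (x : ℕ) = v i0 then (1 : ℝ) else 0) -
        (if (x : ℕ) = N i0 - 1 then 1 else 0)) := by
      intro x
      simp only [hg, if_pos hiB, if_neg hiA, one_mul, ← mul_div_assoc]
      exact mul_div_cancel_left₀ _ (hp x)
    rw [Finset.sum_congr rfl fun x _ => this x]
    exact sum_psi_zero (hN i0) (v i0) (by have := hv i0 hiB; omega)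
end
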